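/- The image 𝒳_* = φ(X) of X in the inverse limit 𝒳 of a FASO is a Hausdorff subspace of 𝒳. -/
import Mathlib


open Metric Set Filter

/-- The FASO bonding map at one level: `q(C) = ⋃_{c ∈ C} B(c,ε) ∩ A`. -/
def qmap {X : Type*} [MetricSpace X] (ε : ℝ) (A : Set X) (C : Set X) : Set X :=
  ⋃ c ∈ C, Metric.ball c ε ∩ A

/-- Iterated bonding maps: `qdown ε A n k` is `q_{n, n+k}`, mapping subsets at level `n+k`
down to subsets at level `n`. -/
def qdown {X : Type*} [MetricSpace X] (ε : ℕ → ℝ) (A : ℕ → Set X) (n : ℕ) :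
    ℕ → Set X → Set X
  | 0, C => C
  | k + 1, C => qdown ε A n k (qmap (ε (n + k)) (A (n + k)) C)

/-- `A_m(x)`: the set of nearest points of `A` to `x`. -/
def nearestPts {X : Type*} [MetricSpace X] (x : X) (A : Set X) : Set X :=
  {a ∈ A | dist x a = Metric.infDist x A}

/-- `X_*^n = ⋃_{m > n} q_{n,m}(A_m(x))`. -/
def Xstar {X : Type*} [MetricSpace X] (ε : ℕ → ℝ) (A : ℕ → Set X) (x : X) (n : ℕ) :
    Set X :=
  ⋃ m, ⋃ (_ : n < m), qdown ε A n (m - n) (nearestPts x (A m))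

/-- The finite space `U_δ(A)`: nonempty subsets of `A` of diameter `< δ`. -/
def Ufin {X : Type*} [MetricSpace X] (δ : ℝ) (A : Set X) : Type _ :=
  {C : Set X // C ⊆ A ∧ C.Nonempty ∧ Metric.diam C < δ}

/-- The Alexandroff topology of the reverse-inclusion order on `U_δ(A)`
(`C ≤ D` iff `D ⊆ C`): the open sets are the lower sets, i.e. the sets closed under
passing to supersets; the minimal open neighborhood of `C` is `{D : C ⊆ D}`. -/
instance UfinTop {X : Type*} [MetricSpace X] (δ : ℝ) (A : Set X) :
    TopologicalSpace (Ufin δ A) where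
  IsOpen S := ∀ C ∈ S, ∀ D : Ufin δ A, C.1 ⊆ D.1 → D ∈ S
  isOpen_univ := fun _ _ D _ => Set.mem_univ D
  isOpen_inter := fun s t hs ht C hC D hCD =>
    ⟨hs C hC.1 D hCD, ht C hC.2 D hCD⟩
  isOpen_sUnion := fun S hS C hC D hCD => by
    obtain ⟨s, hsS, hCs⟩ := hC
    exact ⟨s, hsS, hS s hsS C hCs D hCD⟩

/-- The inverse limit `𝒳` of the inverse sequence `(U_{4ε_n}(A_n), q_{n,n+1})`, as the
subspace of the product `Π n, U_{4ε_n}(A_n)` consisting of the threads. -/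
def FasoLimit {X : Type*} [MetricSpace X] (ε : ℕ → ℝ) (A : ℕ → Set X) : Type _ :=
  {f : (n : ℕ) → Ufin (4 * ε n) (A n) // ∀ n, qmap (ε n) (A n) (f (n + 1)).1 = (f n).1}

instance FasoLimitTop {X : Type*} [MetricSpace X] (ε : ℕ → ℝ) (A : ℕ → Set X) :
    TopologicalSpace (FasoLimit ε A) :=
  inferInstanceAs (TopologicalSpace
    {f : (n : ℕ) → Ufin (4 * ε n) (A n) //
      ∀ n, qmap (ε n) (A n) (f (n + 1)).1 = (f n).1})

section Aux
variable {X : Type*} [MetricSpace X] {e : ℝ} {B C D : Set X} (ε : ℕ → ℝ) (A : ℕ → Set X)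

lemma mem_qmap {b : X} : b ∈ qmap e B C ↔ ∃ c ∈ C, dist b c < e ∧ b ∈ B := by
  simp only [qmap, mem_iUnion, mem_inter_iff, mem_ball]
  tauto

lemma qmap_subset : qmap e B C ⊆ B := by
  intro b hb; rw [mem_qmap] at hb; exact hb.choose_spec.2.2

lemma qmap_mono (hCD : C ⊆ D) : qmap e B C ⊆ qmap e B D := by
  intro b hb; rw [mem_qmap] at hb ⊢
  obtain ⟨c, hc, h1, h2⟩ := hb
  exact ⟨c, hCD hc, h1, h2⟩

lemma qmap_nonempty (happ : ∀ c : X, ∃ a ∈ B, dist c a < e) (h : C.Nonempty) :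
    (qmap e B C).Nonempty := by
  obtain ⟨c, hc⟩ := h
  obtain ⟨a, ha, hd⟩ := happ c
  exact ⟨a, (mem_qmap).2 ⟨c, hc, by rwa [dist_comm], ha⟩⟩

lemma qdown_succ (n k : ℕ) (C : Set X) :
    qdown ε A n (k + 1) C = qmap (ε n) (A n) (qdown ε A (n + 1) k C) := by
  induction k generalizing C with
  | zero => rfl
  | succ k ih =>
    show qdown ε A n (k + 1) (qmap (ε (n + (k+1))) (A (n + (k+1))) C) = _
    rw [ih]
    have h2 : qdown ε A (n+1) k (qmap (ε (n + (k+1))) (A (n + (k+1))) C)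
        = qdown ε A (n+1) (k+1) C := by
      have h : n + (k + 1) = (n + 1) + k := by omega
      rw [h]; rfl
    rw [h2]

lemma qdown_mono (n : ℕ) : ∀ k, C ⊆ D → qdown ε A n k C ⊆ qdown ε A n k D := by
  intro k
  induction k generalizing C D with
  | zero => exact fun h => h
  | succ k ih => exact fun h => ih (qmap_mono h)

lemma qdown_subset (n k : ℕ) (C : Set X) : qdown ε A n (k + 1) C ⊆ A n := by
  rw [qdown_succ]; exact qmap_subset

lemma qdown_nonempty (happ : ∀ m, ∀ c : X, ∃ a ∈ A m, dist c a < ε m) (n : ℕ) :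
    ∀ k, C.Nonempty → (qdown ε A n k C).Nonempty := by
  intro k
  induction k generalizing C n with
  | zero => exact fun h => h
  | succ k ih =>
    intro h
    rw [qdown_succ]
    exact qmap_nonempty (happ n) (ih (n+1) h)

end Aux

section Main
set_option linter.unusedSectionVars false
variable {X : Type*} [MetricSpace X] [Nonempty X]
variable {ε : ℕ → ℝ} {A : ℕ → Set X} {γ : ℕ → ℝ}

lemma gamma_nonneg (hγ : ∀ n, IsLUB (Set.range fun x : X => Metric.infDist x (A n)) (γ n))
    (n : ℕ) : 0 ≤ γ n :=
  le_trans Metric.infDist_nonneg ((hγ n).1 ⟨Classical.arbitrary X, rfl⟩)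

lemma infDist_le_gamma (hγ : ∀ n, IsLUB (Set.range fun x : X => Metric.infDist x (A n)) (γ n))
    (x : X) (n : ℕ) : Metric.infDist x (A n) ≤ γ n :=
  (hγ n).1 ⟨x, rfl⟩

lemma gamma_lt_eps (hεpos : ∀ n, 0 < ε n) (hrec : ∀ n, ε (n + 1) < (ε n - γ n) / 2)
    (n : ℕ) : γ n < ε n := by
  have h1 := hrec n
  have h2 := hεpos (n + 1)
  linarith

lemma nearestPts_nonempty (hAfin : ∀ n, (A n).Finite)
    (hApprox : ∀ n, ∀ x : X, ∃ a ∈ A n, dist x a < ε n) (x : X) (m : ℕ) :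
    (nearestPts x (A m)).Nonempty := by
  obtain ⟨a, ha, -⟩ := hApprox m x
  obtain ⟨y, hy, hdy⟩ := (hAfin m).isCompact.exists_infDist_eq_dist ⟨a, ha⟩ x
  exact ⟨y, hy, hdy.symm⟩

lemma dist_qdown (hεpos : ∀ n, 0 < ε n)
    (hγ : ∀ n, IsLUB (Set.range fun x : X => Metric.infDist x (A n)) (γ n))
    (hrec : ∀ n, ε (n + 1) < (ε n - γ n) / 2) (x : X) :
    ∀ k n b, b ∈ qdown ε A n (k + 1) (nearestPts x (A (n + (k + 1)))) → dist x b < 2 * ε n := by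
  intro k
  induction k with
  | zero =>
    intro n b hb
    rw [qdown_succ] at hb
    rw [mem_qmap] at hb
    obtain ⟨c, hc, hd, -⟩ := hb
    have h1 : dist x c ≤ γ (n + 1) := hc.2 ▸ infDist_le_gamma hγ x (n + 1)
    have h2 : γ (n + 1) < ε (n + 1) := gamma_lt_eps hεpos hrec (n + 1)
    have h3 := hrec n
    have h4 := gamma_nonneg hγ n
    have h5 : dist x b ≤ dist x c + dist b c := by
      rw [dist_comm b c]; exact dist_triangle x c b
    have h6 := hεpos n
    linarith
  | succ k ih =>
    intro n b hb
    rw [qdown_succ, mem_qmap] at hb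
    obtain ⟨c, hc, hd, -⟩ := hb
    have harith : n + (k + 1 + 1) = (n + 1) + (k + 1) := by omega
    rw [harith] at hc
    have h1 : dist x c < 2 * ε (n + 1) := ih (n + 1) c hc
    have h3 := hrec n
    have h4 := gamma_nonneg hγ n
    have h5 : dist x b ≤ dist x c + dist b c := by
      rw [dist_comm b c]; exact dist_triangle x c b
    linarith

lemma Xstar_dist (hεpos : ∀ n, 0 < ε n)
    (hγ : ∀ n, IsLUB (Set.range fun x : X => Metric.infDist x (A n)) (γ n))
    (hrec : ∀ n, ε (n + 1) < (ε n - γ n) / 2) (x : X) (n : ℕ) :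
    ∀ b ∈ Xstar ε A x n, dist x b < 2 * ε n := by
  intro b hb
  simp only [Xstar, mem_iUnion] at hb
  obtain ⟨m, hm, hbm⟩ := hb
  have e1 : m - n = (m - n - 1) + 1 := by omega
  have e2 : m = n + ((m - n - 1) + 1) := by omega
  rw [e1] at hbm
  refine dist_qdown hεpos hγ hrec x (m - n - 1) n b ?_
  rw [show n + (m - n - 1 + 1) = m from by omega]
  exact hbm

lemma Xstar_subset (x : X) (n : ℕ) : Xstar ε A x n ⊆ A n := by
  intro b hb
  simp only [Xstar, mem_iUnion] at hb
  obtain ⟨m, hm, hbm⟩ := hb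
  rw [show m - n = (m - n - 1) + 1 from by omega] at hbm
  exact qdown_subset ε A n _ _ hbm

lemma Xstar_nonempty (hAfin : ∀ n, (A n).Finite)
    (hApprox : ∀ n, ∀ x : X, ∃ a ∈ A n, dist x a < ε n) (x : X) (n : ℕ) :
    (Xstar ε A x n).Nonempty := by
  obtain ⟨b, hb⟩ := qdown_nonempty ε A (fun m c => by
      obtain ⟨a, ha, hd⟩ := hApprox m c; exact ⟨a, ha, hd⟩) n ((n+1) - n)
    (nearestPts_nonempty hAfin hApprox x (n + 1))
  exact ⟨b, by simp only [Xstar, mem_iUnion]; exact ⟨n + 1, Nat.lt_succ_self n, hb⟩⟩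

lemma nearest_step (hεpos : ∀ n, 0 < ε n)
    (hAfin : ∀ n, (A n).Finite)
    (hApprox : ∀ n, ∀ x : X, ∃ a ∈ A n, dist x a < ε n)
    (hγ : ∀ n, IsLUB (Set.range fun x : X => Metric.infDist x (A n)) (γ n))
    (hrec : ∀ n, ε (n + 1) < (ε n - γ n) / 2) (x : X) (m : ℕ) :
    nearestPts x (A m) ⊆ qmap (ε m) (A m) (nearestPts x (A (m + 1))) := by
  intro a ha
  obtain ⟨c, hc⟩ := nearestPts_nonempty hAfin hApprox x (m + 1)
  rw [mem_qmap]
  refine ⟨c, hc, ?_, ha.1⟩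
  have h1 : dist x a ≤ γ m := ha.2 ▸ infDist_le_gamma hγ x m
  have h2 : dist x c ≤ γ (m + 1) := hc.2 ▸ infDist_le_gamma hγ x (m + 1)
  have h3 : γ (m + 1) < ε (m + 1) := gamma_lt_eps hεpos hrec (m + 1)
  have h4 := hrec m
  have h5 : γ m < ε m := gamma_lt_eps hεpos hrec m
  have h6 : dist a c ≤ dist x a + dist x c := by
    rw [dist_comm x a]; exact dist_triangle a x c
  linarith

lemma term_subset_succ (hεpos : ∀ n, 0 < ε n)
    (hAfin : ∀ n, (A n).Finite)
    (hApprox : ∀ n, ∀ x : X, ∃ a ∈ A n, dist x a < ε n)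
    (hγ : ∀ n, IsLUB (Set.range fun x : X => Metric.infDist x (A n)) (γ n))
    (hrec : ∀ n, ε (n + 1) < (ε n - γ n) / 2) (x : X) {n m : ℕ} (h : n ≤ m) :
    qdown ε A n (m - n) (nearestPts x (A m)) ⊆
      qdown ε A n (m + 1 - n) (nearestPts x (A (m + 1))) := by
  have e1 : m + 1 - n = (m - n) + 1 := by omega
  rw [e1]
  show _ ⊆ qdown ε A n (m - n)
    (qmap (ε (n + (m - n))) (A (n + (m - n))) (nearestPts x (A (m + 1))))
  rw [show n + (m - n) = m from by omega]
  exact qdown_mono ε A n (m - n) (nearest_step hεpos hAfin hApprox hγ hrec x m)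

lemma thread (hεpos : ∀ n, 0 < ε n)
    (hAfin : ∀ n, (A n).Finite)
    (hApprox : ∀ n, ∀ x : X, ∃ a ∈ A n, dist x a < ε n)
    (hγ : ∀ n, IsLUB (Set.range fun x : X => Metric.infDist x (A n)) (γ n))
    (hrec : ∀ n, ε (n + 1) < (ε n - γ n) / 2) (x : X) (n : ℕ) :
    qmap (ε n) (A n) (Xstar ε A x (n + 1)) = Xstar ε A x n := by
  apply subset_antisymm
  · intro b hb
    rw [mem_qmap] at hb
    obtain ⟨c, hc, hd, hbA⟩ := hb
    simp only [Xstar, mem_iUnion] at hc ⊢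
    obtain ⟨m, hm, hcm⟩ := hc
    refine ⟨m, by omega, ?_⟩
    rw [show m - n = (m - (n + 1)) + 1 from by omega, qdown_succ]
    rw [mem_qmap]
    exact ⟨c, hcm, hd, hbA⟩
  · intro b hb
    simp only [Xstar, mem_iUnion] at hb
    obtain ⟨m, hm, hbm⟩ := hb
    have hbm' := term_subset_succ hεpos hAfin hApprox hγ hrec x (le_of_lt hm) hbm
    rw [show m + 1 - n = (m - n) + 1 from by omega, qdown_succ] at hbm'
    refine qmap_mono ?_ hbm'
    intro c hc
    simp only [Xstar, mem_iUnion]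
    refine ⟨m + 1, by omega, ?_⟩
    rwa [show m + 1 - (n + 1) = m - n from by omega]

end Main

/-- The image `𝒳_* = φ(X)` of `X` in the inverse limit of a FASO, where
`φ(x) = (X_*^n)`, is a Hausdorff subspace of `𝒳`. -/
theorem stmt_16 {X : Type*} [MetricSpace X] [CompactSpace X] [Nonempty X]
    (ε : ℕ → ℝ) (A : ℕ → Set X) (γ : ℕ → ℝ)
    (hεpos : ∀ n, 0 < ε n)
    (hεlim : Filter.Tendsto ε Filter.atTop (nhds 0))
    (hAfin : ∀ n, (A n).Finite)
    (hApprox : ∀ n, ∀ x : X, ∃ a ∈ A n, dist x a < ε n)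
    (hγ : ∀ n, IsLUB (Set.range fun x : X => Metric.infDist x (A n)) (γ n))
    (hrec : ∀ n, ε (n + 1) < (ε n - γ n) / 2)
    :
    ∃ φ : X → FasoLimit ε A,
      (∀ (x : X) (n : ℕ), ((φ x).1 n).1 = Xstar ε A x n) ∧
      T2Space (Set.range φ) := by
  have hdiam : ∀ (x : X) (n : ℕ), Metric.diam (Xstar ε A x n) < 4 * ε n := by
    intro x n
    have hfin : (Xstar ε A x n).Finite := (hAfin n).subset (Xstar_subset x n)
    have hne := Xstar_nonempty hAfin hApprox x n
    obtain ⟨b0, hb0, hmax⟩ := hfin.isCompact.exists_isMaxOn hne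
      ((continuous_const.dist continuous_id).continuousOn
        : ContinuousOn (fun b => dist x b) (Xstar ε A x n))
    have hb0d : dist x b0 < 2 * ε n := Xstar_dist hεpos hγ hrec x n b0 hb0
    have hle : Metric.diam (Xstar ε A x n) ≤ 2 * dist x b0 := by
      apply Metric.diam_le_of_forall_dist_le (by positivity)
      intro p hp q hq
      have h1 : dist x p ≤ dist x b0 := hmax hp
      have h2 : dist x q ≤ dist x b0 := hmax hq
      calc dist p q ≤ dist p x + dist x q := dist_triangle _ _ _
        _ ≤ dist x b0 + dist x b0 := by rw [dist_comm p x]; linarith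
        _ = 2 * dist x b0 := by ring
    linarith
  refine ⟨fun x =>
    ⟨fun n => ⟨Xstar ε A x n, Xstar_subset x n, Xstar_nonempty hAfin hApprox x n, hdiam x n⟩,
     fun n => thread hεpos hAfin hApprox hγ hrec x n⟩, fun x n => rfl, ?_⟩
  set φ : X → FasoLimit ε A := fun x =>
    ⟨fun n => ⟨Xstar ε A x n, Xstar_subset x n, Xstar_nonempty hAfin hApprox x n, hdiam x n⟩,
     fun n => thread hεpos hAfin hApprox hγ hrec x n⟩ with hφdef
  constructor
  intro a b hab
  obtain ⟨x, hx⟩ := a.2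
  obtain ⟨y, hy⟩ := b.2
  have hxy : x ≠ y := by
    rintro rfl
    exact hab (Subtype.ext (hx.symm.trans hy))
  have hd : 0 < dist x y := dist_pos.2 hxy
  obtain ⟨n₀, hn₀⟩ := (hεlim.eventually_lt_const
    (by positivity : (0:ℝ) < dist x y / 16)).exists
  set S : Set (Ufin (4 * ε n₀) (A n₀)) := {D | Xstar ε A x n₀ ⊆ D.1} with hSdef
  set T : Set (Ufin (4 * ε n₀) (A n₀)) := {D | Xstar ε A y n₀ ⊆ D.1} with hTdef
  have hSopen : IsOpen S := fun C hC D hCD => hC.trans hCD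
  have hTopen : IsOpen T := fun C hC D hCD => hC.trans hCD
  have hcont : Continuous (fun g : Set.range φ => ((g : FasoLimit ε A).1 n₀)) :=
    (continuous_apply n₀).comp (continuous_subtype_val.comp continuous_subtype_val)
  refine ⟨(fun g : Set.range φ => ((g : FasoLimit ε A).1 n₀)) ⁻¹' S,
          (fun g : Set.range φ => ((g : FasoLimit ε A).1 n₀)) ⁻¹' T,
          hSopen.preimage hcont, hTopen.preimage hcont, ?_, ?_, ?_⟩
  · show Xstar ε A x n₀ ⊆ (((a : FasoLimit ε A)).1 n₀).1
    rw [← hx]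
  · show Xstar ε A y n₀ ⊆ (((b : FasoLimit ε A)).1 n₀).1
    rw [← hy]
  · rw [Set.disjoint_left]
    intro g hgS hgT
    obtain ⟨z, hz⟩ := g.2
    have hgz : (((g : FasoLimit ε A)).1 n₀).1 = Xstar ε A z n₀ := by rw [← hz]
    obtain ⟨p, hp⟩ := Xstar_nonempty hAfin hApprox x n₀
    obtain ⟨q, hq⟩ := Xstar_nonempty hAfin hApprox y n₀
    have hpz : p ∈ Xstar ε A z n₀ := by
      have := hgS hp; rwa [hgz] at this
    have hqz : q ∈ Xstar ε A z n₀ := by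
      have := hgT hq; rwa [hgz] at this
    have d1 := Xstar_dist hεpos hγ hrec x n₀ p hp
    have d2 := Xstar_dist hεpos hγ hrec y n₀ q hq
    have d3 := Xstar_dist hεpos hγ hrec z n₀ p hpz
    have d4 := Xstar_dist hεpos hγ hrec z n₀ q hqz
    have t1 : dist x y ≤ dist x q + dist q y := dist_triangle _ _ _
    have t2 : dist x q ≤ dist x p + dist p z + dist z q := dist_triangle4 _ _ _ _
    have c1 : dist p z = dist z p := dist_comm _ _
    have c2 : dist q y = dist y q := dist_comm _ _
    linarith
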